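/- Let n ≥ 4 and m = n(n+1)/2. On ℝ^m with coordinates x_j (1 ≤ j ≤ n) and x_{kl} (1 ≤ k < l ≤ n), with the vector fields U_{kl} and X_j as in the homogeneous model, define X₁' = X₁ + x₁₂·U₃₄ + (1/2)x₂·U₂₁ and X₂' = X₂ − (1/2)x₁·U₁₂. Then the Lie brackets satisfy: [X₁', X₂'] = U₁₂; [U₁₂, X₁'] = U₃₄; [X₁', X_j] = U₁ⱼ and [X₂', X_j] = U₂ⱼ for 3 ≤ j ≤ n; [U_{kl}, X₁'] = 0 whenever {k,l} ≠ {1,2}; and [U_{kl}, X₂'] = 0 for all k < l. In particular, the frame {X₁', X₂', X₃, …, X_n, U_{kl}} has the same commutator relations as the flat model except for the single additional relation [U₁₂, X₁'] = U₃₄. -/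

import Mathlib

/-!
Statement 0: the commutator relations of the frame `U_{kl}`, `X_j` of the homogeneous
model of a free `n`-distribution on `ℝ^m`, `m = n(n+1)/2`.
-/

open scoped BigOperators

/-- The index set for the coordinates on `ℝ^m`, `m = n(n+1)/2`: the coordinates `x_j`
for `1 ≤ j ≤ n` and the coordinates `x_{kl}` for `1 ≤ k < l ≤ n`. -/
abbrev FreeDist.Idx (n : ℕ) := Fin n ⊕ {p : Fin n × Fin n // p.1 < p.2}

namespace FreeDist

/-- The constant vector `U_{kl} = ∂/∂x_{kl}` for `k < l`, extended to all indices by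
`U_{lk} = -U_{kl}` and `U_{kk} = 0`. -/
def uVec (n : ℕ) (k l : Fin n) : Idx n → ℝ :=
  Sum.elim (fun _ => 0) (fun p =>
    (if p.1.1 = k ∧ p.1.2 = l then (1 : ℝ) else 0) -
    (if p.1.1 = l ∧ p.1.2 = k then (1 : ℝ) else 0))

/-- The constant vector field `U_{kl}`. -/
def uField (n : ℕ) (k l : Fin n) : (Idx n → ℝ) → Idx n → ℝ := fun _ => uVec n k l

/-- The vector field `X_j = ∂/∂x_j + (1/2) ∑_{p=1}^n x_p U_{pj}`. -/
noncomputable def xField (n : ℕ) (j : Fin n) : (Idx n → ℝ) → Idx n → ℝ := fun q =>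
  (fun i => if i = Sum.inl j then (1 : ℝ) else 0) +
    (1 / 2 : ℝ) • ∑ p : Fin n, q (Sum.inl p) • uVec n p j

/-- The Lie bracket of vector fields on `ℝ^m`:
`[V,W](p) = DW_p(V(p)) − DV_p(W(p))`. -/
noncomputable def vbracket (n : ℕ) (V W : (Idx n → ℝ) → Idx n → ℝ) : (Idx n → ℝ) → Idx n → ℝ :=
  fun q => fderiv ℝ W q (V q) - fderiv ℝ V q (W q)

end FreeDist

open FreeDist

noncomputable section

namespace FreeDist

/-- The modified vector field `X₁' = X₁ + x₁₂·U₃₄ + (1/2)x₂·U₂₁` (with 1-based indices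
as in the paper; here indices are 0-based). -/
def x1' (n : ℕ) (hn : 4 ≤ n) : (Idx n → ℝ) → Idx n → ℝ := fun q =>
  xField n ⟨0, by omega⟩ q +
    q (Sum.inr ⟨(⟨0, by omega⟩, ⟨1, by omega⟩), by simp [Fin.mk_lt_mk]⟩) •
      uVec n ⟨2, by omega⟩ ⟨3, by omega⟩ +
    ((1 / 2 : ℝ) * q (Sum.inl ⟨1, by omega⟩)) • uVec n ⟨1, by omega⟩ ⟨0, by omega⟩

/-- The modified vector field `X₂' = X₂ − (1/2)x₁·U₁₂`. -/
def x2' (n : ℕ) (hn : 4 ≤ n) : (Idx n → ℝ) → Idx n → ℝ := fun q =>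
  xField n ⟨1, by omega⟩ q -
    ((1 / 2 : ℝ) * q (Sum.inl ⟨0, by omega⟩)) • uVec n ⟨0, by omega⟩ ⟨1, by omega⟩

end FreeDist

/-!
All the fields are affine, `V q = V 0 + A q`, so `[V, W] q = B (V q) - A (W q)` where `A`, `B`
are their constant derivatives. These read only the coordinates `x_p` (and, for `X₁'`, also
`x₁₂`), on which `X_j`, `X₁'`, `X₂'` are constant unit vectors and the `U_{kl}` vanish, so
every bracket is an explicit combination of the `U_{kl}`. The new term `x₁₂ U₃₄` of `X₁'`
contributes only through the `x₁₂`-component of the other field. Among the fields bracketed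
with `X₁'` only `U₁₂` has one, which produces `U₃₄`; that of `X₂'` vanishes because the
correction `-(1/2) x₁ U₁₂` cancels the `x₁₂`-component `(1/2) x₁` of `X₂`.
-/

lemma hasFDerivAt_of_forall_eq_add {𝕜 E F : Type*} [NontriviallyNormedField 𝕜]
    [NormedAddCommGroup E] [NormedSpace 𝕜 E] [NormedAddCommGroup F] [NormedSpace 𝕜 F]
    {V : E → F} {A : E →L[𝕜] F} (hV : ∀ q, V q = V 0 + A q) (q : E) : HasFDerivAt V A q :=
  (A.hasFDerivAt.const_add (V 0)).congr_of_eventuallyEq (Filter.Eventually.of_forall hV)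

namespace FreeDist

variable {n : ℕ}

@[simp]
lemma uVec_inl (k l p : Fin n) : uVec n k l (Sum.inl p) = 0 := rfl

lemma uVec_inr (k l : Fin n) (p : {p : Fin n × Fin n // p.1 < p.2}) :
    uVec n k l (Sum.inr p) =
      (if p.1.1 = k ∧ p.1.2 = l then (1 : ℝ) else 0) -
      (if p.1.1 = l ∧ p.1.2 = k then (1 : ℝ) else 0) := rfl

lemma uVec_swap (k l : Fin n) : uVec n l k = -uVec n k l := by
  funext i
  cases i with
  | inl p => simp
  | inr p => simp only [uVec_inr, Pi.neg_apply]; ring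

lemma vbracket_apply_of_hasFDerivAt {V W : (Idx n → ℝ) → Idx n → ℝ}
    {A B : (Idx n → ℝ) →L[ℝ] (Idx n → ℝ)} {q : Idx n → ℝ}
    (hV : HasFDerivAt V A q) (hW : HasFDerivAt W B q) :
    vbracket n V W q = B (V q) - A (W q) := by
  rw [vbracket, hV.fderiv, hW.fderiv]

lemma hasFDerivAt_uField (k l : Fin n) (q : Idx n → ℝ) :
    HasFDerivAt (uField n k l) (0 : (Idx n → ℝ) →L[ℝ] (Idx n → ℝ)) q :=
  hasFDerivAt_const _ _

def xFieldLin (n : ℕ) (j : Fin n) : (Idx n → ℝ) →L[ℝ] (Idx n → ℝ) :=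
  (1 / 2 : ℝ) • ∑ p : Fin n,
    (ContinuousLinearMap.proj (R := ℝ) (Sum.inl p)).smulRight (uVec n p j)

lemma xFieldLin_apply (j : Fin n) (w : Idx n → ℝ) :
    xFieldLin n j w = (1 / 2 : ℝ) • ∑ p : Fin n, w (Sum.inl p) • uVec n p j := by
  simp [xFieldLin]

lemma xFieldLin_uVec (j k l : Fin n) : xFieldLin n j (uVec n k l) = 0 := by
  simp [xFieldLin_apply]

lemma xFieldLin_apply_of_inl_eq_single {j a : Fin n} {w : Idx n → ℝ}
    (hw : ∀ p, w (Sum.inl p) = if p = a then 1 else 0) :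
    xFieldLin n j w = (1 / 2 : ℝ) • uVec n a j := by
  simp [xFieldLin_apply, hw, ite_smul]

lemma hasFDerivAt_xField (j : Fin n) (q : Idx n → ℝ) :
    HasFDerivAt (xField n j) (xFieldLin n j) q := by
  refine hasFDerivAt_of_forall_eq_add (fun q => ?_) q
  simp [xField, xFieldLin_apply]

lemma xField_inl (j : Fin n) (q : Idx n → ℝ) (p : Fin n) :
    xField n j q (Sum.inl p) = if p = j then 1 else 0 := by
  simp [xField, Finset.sum_apply]

section PrimedFields

variable (hn : 4 ≤ n)
include hn

def coord01 : Idx n := Sum.inr ⟨(⟨0, by omega⟩, ⟨1, by omega⟩), by simp [Fin.mk_lt_mk]⟩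

def x1'Lin : (Idx n → ℝ) →L[ℝ] (Idx n → ℝ) :=
  xFieldLin n ⟨0, by omega⟩ +
    (ContinuousLinearMap.proj (coord01 hn)).smulRight (uVec n ⟨2, by omega⟩ ⟨3, by omega⟩) +
    (1 / 2 : ℝ) • (ContinuousLinearMap.proj (R := ℝ)
      (Sum.inl (⟨1, by omega⟩ : Fin n))).smulRight (uVec n ⟨1, by omega⟩ ⟨0, by omega⟩)

def x2'Lin : (Idx n → ℝ) →L[ℝ] (Idx n → ℝ) :=
  xFieldLin n ⟨1, by omega⟩ -
    (1 / 2 : ℝ) • (ContinuousLinearMap.proj (R := ℝ)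
      (Sum.inl (⟨0, by omega⟩ : Fin n))).smulRight (uVec n ⟨0, by omega⟩ ⟨1, by omega⟩)

lemma x1'Lin_apply (w : Idx n → ℝ) :
    x1'Lin hn w = xFieldLin n ⟨0, by omega⟩ w +
      w (coord01 hn) • uVec n ⟨2, by omega⟩ ⟨3, by omega⟩ +
      ((1 / 2 : ℝ) * w (Sum.inl ⟨1, by omega⟩)) • uVec n ⟨1, by omega⟩ ⟨0, by omega⟩ := by
  simp [x1'Lin, smul_smul]

lemma x2'Lin_apply (w : Idx n → ℝ) :
    x2'Lin hn w = xFieldLin n ⟨1, by omega⟩ w -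
      ((1 / 2 : ℝ) * w (Sum.inl ⟨0, by omega⟩)) • uVec n ⟨0, by omega⟩ ⟨1, by omega⟩ := by
  simp [x2'Lin, smul_smul]

lemma hasFDerivAt_x1' (q : Idx n → ℝ) : HasFDerivAt (x1' n hn) (x1'Lin hn) q := by
  refine hasFDerivAt_of_forall_eq_add (fun q => ?_) q
  rw [x1'Lin_apply, x1', x1', xField, xField, xFieldLin_apply]
  simp [coord01, add_assoc]

lemma hasFDerivAt_x2' (q : Idx n → ℝ) : HasFDerivAt (x2' n hn) (x2'Lin hn) q := by
  refine hasFDerivAt_of_forall_eq_add (fun q => ?_) q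
  rw [x2'Lin_apply, x2', x2', xField, xField, xFieldLin_apply]
  simp [add_sub_assoc]

lemma x1'_inl (q : Idx n → ℝ) (p : Fin n) :
    x1' n hn q (Sum.inl p) = if p = ⟨0, by omega⟩ then 1 else 0 := by
  simp [x1', xField_inl]

lemma x2'_inl (q : Idx n → ℝ) (p : Fin n) :
    x2' n hn q (Sum.inl p) = if p = ⟨1, by omega⟩ then 1 else 0 := by
  simp [x2', xField_inl]

lemma xField_coord01 {j : Fin n} (hj0 : j ≠ ⟨0, by omega⟩) (hj1 : j ≠ ⟨1, by omega⟩)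
    (q : Idx n → ℝ) : xField n j q (coord01 hn) = 0 := by
  simp [xField, Finset.sum_apply, coord01, uVec_inr, hj0.symm, hj1.symm]

lemma x2'_coord01 (q : Idx n → ℝ) : x2' n hn q (coord01 hn) = 0 := by
  have h01 : (⟨0, by omega⟩ : Fin n) ≠ ⟨1, by omega⟩ := by simp [Fin.ext_iff]
  simp [x2', xField, Finset.sum_apply, coord01, uVec_inr, h01, mul_ite]

theorem vbracket_x1'_x2' :
    vbracket n (x1' n hn) (x2' n hn) = uField n ⟨0, by omega⟩ ⟨1, by omega⟩ := by
  funext q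
  rw [vbracket_apply_of_hasFDerivAt (hasFDerivAt_x1' hn q) (hasFDerivAt_x2' hn q),
    x1'Lin_apply, x2'Lin_apply, xFieldLin_apply_of_inl_eq_single (x1'_inl hn q),
    xFieldLin_apply_of_inl_eq_single (x2'_inl hn q), x1'_inl, x2'_inl, x2'_coord01,
    uVec_swap ⟨0, by omega⟩ ⟨1, by omega⟩]
  simp only [if_pos, uField]
  module

theorem vbracket_uField_x1'_of_ne {k l : Fin n} (hkl : k < l)
    (hne : ¬(k = ⟨0, by omega⟩ ∧ l = ⟨1, by omega⟩)) :
    vbracket n (uField n k l) (x1' n hn) = 0 := by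
  funext q
  rw [vbracket_apply_of_hasFDerivAt (hasFDerivAt_uField k l q) (hasFDerivAt_x1' hn q),
    uField, x1'Lin_apply, xFieldLin_uVec]
  have hne' : ¬(⟨0, by omega⟩ = k ∧ ⟨1, by omega⟩ = l) := fun h =>
    hne ⟨h.1.symm, h.2.symm⟩
  have hlt : ¬(⟨0, by omega⟩ = l ∧ ⟨1, by omega⟩ = k) := by
    rintro ⟨h0, h1⟩
    rw [← h0, ← h1] at hkl
    simp [Fin.lt_def] at hkl
  simp [coord01, uVec_inr, hne', hlt]

theorem vbracket_uField01_x1' :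
    vbracket n (uField n ⟨0, by omega⟩ ⟨1, by omega⟩) (x1' n hn) =
      uField n ⟨2, by omega⟩ ⟨3, by omega⟩ := by
  funext q
  rw [vbracket_apply_of_hasFDerivAt (hasFDerivAt_uField _ _ q) (hasFDerivAt_x1' hn q),
    uField, x1'Lin_apply, xFieldLin_uVec]
  simp [coord01, uVec_inr, Fin.ext_iff, uField]

theorem vbracket_uField_x2' (k l : Fin n) : vbracket n (uField n k l) (x2' n hn) = 0 := by
  funext q
  rw [vbracket_apply_of_hasFDerivAt (hasFDerivAt_uField k l q) (hasFDerivAt_x2' hn q),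
    uField, x2'Lin_apply, xFieldLin_uVec]
  simp

theorem vbracket_x1'_xField {j : Fin n} (hj : 2 ≤ (j : ℕ)) :
    vbracket n (x1' n hn) (xField n j) = uField n ⟨0, by omega⟩ j := by
  have hj0 : j ≠ ⟨0, by omega⟩ := fun h => by simp [h] at hj
  have hj1 : j ≠ ⟨1, by omega⟩ := fun h => by simp [h] at hj
  funext q
  rw [vbracket_apply_of_hasFDerivAt (hasFDerivAt_x1' hn q) (hasFDerivAt_xField j q),
    x1'Lin_apply, xFieldLin_apply_of_inl_eq_single (x1'_inl hn q),
    xFieldLin_apply_of_inl_eq_single (xField_inl j q), xField_inl, xField_coord01 hn hj0 hj1,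
    uVec_swap ⟨0, by omega⟩ j, if_neg hj1.symm]
  simp only [uField]
  module

theorem vbracket_x2'_xField {j : Fin n} (hj : 2 ≤ (j : ℕ)) :
    vbracket n (x2' n hn) (xField n j) = uField n ⟨1, by omega⟩ j := by
  have hj0 : j ≠ ⟨0, by omega⟩ := fun h => by simp [h] at hj
  funext q
  rw [vbracket_apply_of_hasFDerivAt (hasFDerivAt_x2' hn q) (hasFDerivAt_xField j q),
    x2'Lin_apply, xFieldLin_apply_of_inl_eq_single (x2'_inl hn q),
    xFieldLin_apply_of_inl_eq_single (xField_inl j q), xField_inl,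
    uVec_swap ⟨1, by omega⟩ j, if_neg hj0.symm]
  simp only [uField]
  module

end PrimedFields

end FreeDist

/-- For `n ≥ 4`, the frame `{X₁', X₂', X₃, …, X_n, U_{kl}}` satisfies the same commutator
relations as the flat homogeneous model, except for the single additional relation
`[U₁₂, X₁'] = U₃₄`. -/
theorem statement19 (n : ℕ) (hn : 4 ≤ n) :
    vbracket n (x1' n hn) (x2' n hn) = uField n ⟨0, by omega⟩ ⟨1, by omega⟩ ∧
    vbracket n (uField n ⟨0, by omega⟩ ⟨1, by omega⟩) (x1' n hn) =
      uField n ⟨2, by omega⟩ ⟨3, by omega⟩ ∧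
    (∀ j : Fin n, 2 ≤ (j : ℕ) →
      vbracket n (x1' n hn) (xField n j) = uField n ⟨0, by omega⟩ j ∧
      vbracket n (x2' n hn) (xField n j) = uField n ⟨1, by omega⟩ j) ∧
    (∀ k l : Fin n, k < l → ¬(k = ⟨0, by omega⟩ ∧ l = ⟨1, by omega⟩) →
      vbracket n (uField n k l) (x1' n hn) = 0) ∧
    (∀ k l : Fin n, k < l → vbracket n (uField n k l) (x2' n hn) = 0) :=
  ⟨vbracket_x1'_x2' hn, vbracket_uField01_x1' hn,
    fun _ hj => ⟨vbracket_x1'_xField hn hj, vbracket_x2'_xField hn hj⟩,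
    fun _ _ hkl hne => vbracket_uField_x1'_of_ne hn hkl hne,
    fun k l _ => vbracket_uField_x2' hn k l⟩

end
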